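/- Let S_{U,0,4} be the linear span of S_U, ψ₀ and ψ₄ in ℂ³ ⊗ ℂ³. Then S_{U,0,4} contains infinitely many distinct one-dimensional subspaces spanned by product vectors; explicitly, for every t ∈ ℂ, the product vector |0⟩ ⊗ (|0⟩ + t|1⟩) lies in S_{U,0,4}. In particular, S_{U,0,4} is not a quasi-completely entangled subspace. -/

import Mathlib

noncomputable section

abbrev H3 : Type := EuclideanSpace ℂ (Fin 3)
abbrev H33 : Type := EuclideanSpace ℂ (Fin 3 × Fin 3)

/-- standard basis vector of ℂ³ -/
def ket3 (i : Fin 3) : H3 := EuclideanSpace.single i 1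

/-- elementary tensor of two vectors of ℂ³, viewed in ℂ³ ⊗ ℂ³ ≅ ℂ⁹ -/
def tp (u v : H3) : H33 := WithLp.toLp 2 (fun p : Fin 3 × Fin 3 => u p.1 * v p.2)

/-- a product vector in ℂ³ ⊗ ℂ³ -/
def IsProdVec (ξ : H33) : Prop := ∃ u v : H3, ξ = tp u v

/-- the set of one-dimensional subspaces of `T` spanned by (nonzero) product vectors -/
def prodLines (T : Submodule ℂ H33) : Set (Submodule ℂ H33) :=
  {L | ∃ ξ : H33, ξ ≠ 0 ∧ ξ ∈ T ∧ IsProdVec ξ ∧ L = Submodule.span ℂ {ξ}}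

def ψ₀ : H33 := (Real.sqrt 2 : ℂ)⁻¹ • tp (ket3 0) (ket3 0 - ket3 1)
def ψ₁ : H33 := (Real.sqrt 2 : ℂ)⁻¹ • tp (ket3 2) (ket3 1 - ket3 2)
def ψ₂ : H33 := (Real.sqrt 2 : ℂ)⁻¹ • tp (ket3 0 - ket3 1) (ket3 2)
def ψ₃ : H33 := (Real.sqrt 2 : ℂ)⁻¹ • tp (ket3 2 - ket3 1) (ket3 0)
def ψ₄ : H33 := (3 : ℂ)⁻¹ • tp (ket3 0 + ket3 1 + ket3 2) (ket3 0 + ket3 1 + ket3 2)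

/-- the span of the TILES unextendible product basis -/
def U33 : Submodule ℂ H33 := Submodule.span ℂ {ψ₀, ψ₁, ψ₂, ψ₃, ψ₄}

/-- the orthogonal complement of the span of the TILES UPB -/
def SU : Submodule ℂ H33 := U33ᗮ

/-- the double perturbation of `S_U` by `ψ₀` and `ψ₄` -/
def SU04 : Submodule ℂ H33 := SU ⊔ Submodule.span ℂ {ψ₀} ⊔ Submodule.span ℂ {ψ₄}
/-! The TILES vectors are mutually orthogonal, so putting `ψ₀` and `ψ₄` back into `S_U` yields
exactly the orthogonal complement of `span {ψ₁, ψ₂, ψ₃}`. Each `|0⟩ ⊗ (|0⟩ + t|1⟩)` is orthogonal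
to `ψ₁`, `ψ₂`, `ψ₃` because in each pairing one of the tensor factors is already orthogonal, and
distinct `t` give distinct lines because `|0⟩ ⊗ |0⟩` and `|0⟩ ⊗ |1⟩` are linearly independent. -/

open scoped InnerProductSpace

namespace Submodule

theorem orthogonal_eq_sup_orthogonal_sup {𝕜 E : Type*} [RCLike 𝕜] [NormedAddCommGroup E]
    [InnerProductSpace 𝕜 E] {K L : Submodule 𝕜 E} [K.HasOrthogonalProjection] (hKL : K ⟂ L) :
    Lᗮ = K ⊔ (K ⊔ L)ᗮ := by
  rw [← inf_orthogonal]
  exact (sup_orthogonal_inf_of_hasOrthogonalProjection hKL).symm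

end Submodule

namespace LinearIndependent

variable {K V : Type*} [Field K] [AddCommGroup V] [Module K V] {x y : V}

theorem add_smul_ne_zero (hxy : LinearIndependent K ![x, y]) (t : K) : x + t • y ≠ 0 :=
  fun h => one_ne_zero (pair_iff.mp hxy 1 t (by simpa using h)).1

theorem injective_span_singleton_add_smul (hxy : LinearIndependent K ![x, y]) :
    Function.Injective fun t : K => Submodule.span K {x + t • y} := by
  intro t s hts
  have hmem : x + t • y ∈ Submodule.span K {x + s • y} := by
    rw [← show Submodule.span K {x + t • y} = Submodule.span K {x + s • y} from hts]
    exact Submodule.mem_span_singleton_self _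
  obtain ⟨c, hc⟩ := Submodule.mem_span_singleton.mp hmem
  obtain ⟨hc1, hcst⟩ := pair_iff.mp hxy (c - 1) (c * s - t) (by
    linear_combination (norm := module) hc)
  linear_combination s * hc1 - hcst

end LinearIndependent

theorem inner_tp (u₁ v₁ u₂ v₂ : H3) : ⟪tp u₁ v₁, tp u₂ v₂⟫_ℂ = ⟪u₁, u₂⟫_ℂ * ⟪v₁, v₂⟫_ℂ := by
  simp only [tp, PiLp.inner_apply, Fintype.sum_prod_type, Finset.sum_mul_sum, RCLike.inner_apply,
    map_mul]
  refine Finset.sum_congr rfl fun i _ => Finset.sum_congr rfl fun j _ => ?_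
  ring

theorem tp_add_smul_right (u v w : H3) (t : ℂ) : tp u (v + t • w) = tp u v + t • tp u w := by
  ext p
  simp only [tp, PiLp.add_apply, PiLp.smul_apply, smul_eq_mul]
  ring

theorem inner_ket3 (i j : Fin 3) : ⟪ket3 i, ket3 j⟫_ℂ = if i = j then 1 else 0 := by
  simp [ket3, EuclideanSpace.inner_single_left, PiLp.single_apply]

open Submodule

theorem span_ψ₀_ψ₄_isOrtho : span ℂ {ψ₀, ψ₄} ⟂ span ℂ {ψ₁, ψ₂, ψ₃} := by
  simp only [isOrtho_span, Set.mem_insert_iff, Set.mem_singleton_iff]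
  rintro _ (rfl | rfl) _ (rfl | rfl | rfl) <;>
    simp only [ψ₀, ψ₁, ψ₂, ψ₃, ψ₄, inner_smul_left, inner_smul_right, inner_tp, inner_add_left,
      inner_sub_left, inner_sub_right, inner_ket3] <;> simp

theorem SU04_eq_orthogonal : SU04 = (span ℂ {ψ₁, ψ₂, ψ₃})ᗮ := by
  have hU : U33 = span ℂ {ψ₀, ψ₄} ⊔ span ℂ {ψ₁, ψ₂, ψ₃} := by
    rw [U33, ← span_union]
    congr 1
    ext
    simp only [Set.mem_insert_iff, Set.mem_singleton_iff, Set.mem_union]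
    tauto
  rw [orthogonal_eq_sup_orthogonal_sup span_ψ₀_ψ₄_isOrtho, ← hU, SU04, SU, span_insert]
  ac_rfl

theorem tp_ket3_zero_mem_SU04 (t : ℂ) : tp (ket3 0) (ket3 0 + t • ket3 1) ∈ SU04 := by
  rw [SU04_eq_orthogonal, ← span_singleton_le_iff_mem]
  refine (isOrtho_span.mpr ?_).symm
  simp only [Set.mem_insert_iff, Set.mem_singleton_iff]
  rintro _ (rfl | rfl | rfl) _ rfl <;>
    simp only [ψ₁, ψ₂, ψ₃, inner_smul_left, inner_tp, inner_add_right, inner_smul_right,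
      inner_sub_left, inner_ket3] <;> simp

theorem orthonormal_tp_ket3 : Orthonormal ℂ ![tp (ket3 0) (ket3 0), tp (ket3 0) (ket3 1)] := by
  rw [orthonormal_iff_ite]
  intro i j
  fin_cases i <;> fin_cases j <;> simp [inner_tp, inner_ket3, -inner_self_eq_norm_sq_to_K]

theorem statement15 :
    (∀ t : ℂ, tp (ket3 0) (ket3 0 + t • ket3 1) ∈ SU04) ∧
    (prodLines SU04).Infinite := by
  have hli := orthonormal_tp_ket3.linearIndependent
  refine ⟨tp_ket3_zero_mem_SU04,
    Set.infinite_of_injective_forall_mem hli.injective_span_singleton_add_smul fun t => ?_⟩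
  have hne := hli.add_smul_ne_zero t
  rw [← tp_add_smul_right] at hne ⊢
  exact ⟨_, hne, tp_ket3_zero_mem_SU04 t, ⟨_, _, rfl⟩, rfl⟩
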